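/- If a nested sequent Γ ⊢ Δ is derivable in N-LBiI, then the flattened sequent ⌊Γ⌋ ⊢ ⌈Δ⌉ is derivable in LBiI. -/
import Mathlib


/-- BiInt formulas -/
inductive Form : Type
  | atom : ℕ → Form
  | top  : Form
  | bot  : Form
  | and  : Form → Form → Form
  | or   : Form → Form → Form
  | imp  : Form → Form → Form
  | excl : Form → Form → Form
  deriving DecidableEq

/-- Kripke structures for BiInt -/
structure Kripke where
  W : Type
  le : W → W → Prop
  le_refl : ∀ w, le w w
  le_trans : ∀ u v w, le u v → le v w → le u w
  nonempty : Nonempty W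
  I : W → Set ℕ
  mono : ∀ {w w'}, le w w' → I w ⊆ I w'

/-- truth of a formula at a world -/
def Kripke.force (K : Kripke) : K.W → Form → Prop
  | w, .atom p => p ∈ K.I w
  | _, .top => True
  | _, .bot => False
  | w, .and A B => K.force w A ∧ K.force w B
  | w, .or A B => K.force w A ∨ K.force w B
  | w, .imp A B => ∀ w', K.le w w' → K.force w' A → K.force w' B
  | w, .excl A B => ∃ w', K.le w' w ∧ K.force w' A ∧ ¬ K.force w' B

/-- validity of a sequent -/
def SeqValid (Γ Δ : Multiset Form) : Prop :=
  ∀ (K : Kripke) (w : K.W), (∀ A ∈ Γ, K.force w A) → ∃ A ∈ Δ, K.force w A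

/-- The standard-style sequent calculus LBiI; the boolean parameter tells whether
the cut rule is allowed (`LD false` is cut-free LBiI). -/
inductive LD : Bool → Multiset Form → Multiset Form → Prop
  | hyp (b) (A : Form) (Γ Δ) : LD b (A ::ₘ Γ) (A ::ₘ Δ)
  | cut {Γ Δ} (A : Form) : LD true Γ (A ::ₘ Δ) → LD true (A ::ₘ Γ) Δ → LD true Γ Δ
  | weakL {b Γ Δ} (A : Form) : LD b Γ Δ → LD b (A ::ₘ Γ) Δ
  | weakR {b Γ Δ} (A : Form) : LD b Γ Δ → LD b Γ (A ::ₘ Δ)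
  | contrL {b Γ Δ} {A : Form} : LD b (A ::ₘ A ::ₘ Γ) Δ → LD b (A ::ₘ Γ) Δ
  | contrR {b Γ Δ} {A : Form} : LD b Γ (A ::ₘ A ::ₘ Δ) → LD b Γ (A ::ₘ Δ)
  | topL {b Γ Δ} : LD b Γ Δ → LD b (Form.top ::ₘ Γ) Δ
  | topR (b Γ Δ) : LD b Γ (Form.top ::ₘ Δ)
  | botL (b Γ Δ) : LD b (Form.bot ::ₘ Γ) Δ
  | botR {b Γ Δ} : LD b Γ Δ → LD b Γ (Form.bot ::ₘ Δ)
  | andL {b Γ Δ A B} : LD b (A ::ₘ B ::ₘ Γ) Δ → LD b (Form.and A B ::ₘ Γ) Δ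
  | andR {b Γ Δ A B} : LD b Γ (A ::ₘ Δ) → LD b Γ (B ::ₘ Δ) → LD b Γ (Form.and A B ::ₘ Δ)
  | orL {b Γ Δ A B} : LD b (A ::ₘ Γ) Δ → LD b (B ::ₘ Γ) Δ → LD b (Form.or A B ::ₘ Γ) Δ
  | orR {b Γ Δ A B} : LD b Γ (A ::ₘ B ::ₘ Δ) → LD b Γ (Form.or A B ::ₘ Δ)
  | impL {b Γ Δ A B} : LD b (Form.imp A B ::ₘ Γ) (A ::ₘ Δ) → LD b (B ::ₘ Γ) Δ →
      LD b (Form.imp A B ::ₘ Γ) Δ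
  | impR {b Γ Δ A B} : LD b (A ::ₘ Γ) {B} → LD b Γ (Form.imp A B ::ₘ Δ)
  | exclL {b Γ Δ A B} : LD b {A} (B ::ₘ Δ) → LD b (Form.excl A B ::ₘ Γ) Δ
  | exclR {b Γ Δ A B} : LD b Γ (A ::ₘ Δ) → LD b (B ::ₘ Γ) (Form.excl A B ::ₘ Δ) →
      LD b Γ (Form.excl A B ::ₘ Δ)

/-- members of nested contexts: formulas or nested sequents -/
inductive NForm : Type
  | fm : Form → NForm
  | seq : List NForm → List NForm → NForm

mutual
  /-- deep equality of nested-context members up to permutation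
  (nested contexts are multisets) -/
  inductive NEq : NForm → NForm → Prop
    | fm (A : Form) : NEq (.fm A) (.fm A)
    | seq {Γ Γ' Δ Δ'} : CEq Γ Γ' → CEq Δ Δ' → NEq (.seq Γ Δ) (.seq Γ' Δ')
  /-- equality of nested contexts as multisets -/
  inductive CEq : List NForm → List NForm → Prop
    | nil : CEq [] []
    | cons {a b Γ Γ'} : NEq a b → CEq Γ Γ' → CEq (a :: Γ) (b :: Γ')
    | swap (a b : NForm) (Γ : List NForm) : CEq (a :: b :: Γ) (b :: a :: Γ)
    | trans {Γ Γ' Γ''} : CEq Γ Γ' → CEq Γ' Γ'' → CEq Γ Γ''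
end

/-- The nested sequent calculus N-LBiI; the boolean parameter tells whether
the cut rule is allowed. Nested contexts are lists identified up to `CEq`
(i.e. multisets), so there is an explicit exchange rule. -/
inductive ND : Bool → List NForm → List NForm → Prop
  | exch {b Γ Γ' Δ Δ'} : CEq Γ Γ' → CEq Δ Δ' → ND b Γ Δ → ND b Γ' Δ'
  | hyp (b) (A : Form) (Γ Δ) : ND b (.fm A :: Γ) (.fm A :: Δ)
  | cut {Γ Δ} (A : Form) : ND true Γ (.fm A :: Δ) → ND true (.fm A :: Γ) Δ → ND true Γ Δ
  | weakL {b Γ Δ} (A : Form) : ND b Γ Δ → ND b (.fm A :: Γ) Δ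
  | weakR {b Γ Δ} (A : Form) : ND b Γ Δ → ND b Γ (.fm A :: Δ)
  | contrL {b Γ Δ} {A : Form} : ND b (.fm A :: .fm A :: Γ) Δ → ND b (.fm A :: Γ) Δ
  | contrR {b Γ Δ} {A : Form} : ND b Γ (.fm A :: .fm A :: Δ) → ND b Γ (.fm A :: Δ)
  | topL {b Γ Δ} : ND b Γ Δ → ND b (.fm .top :: Γ) Δ
  | topR (b Γ Δ) : ND b Γ (.fm .top :: Δ)
  | botL (b Γ Δ) : ND b (.fm .bot :: Γ) Δ
  | botR {b Γ Δ} : ND b Γ Δ → ND b Γ (.fm .bot :: Δ)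
  | andL {b Γ Δ A B} : ND b (.fm A :: .fm B :: Γ) Δ → ND b (.fm (.and A B) :: Γ) Δ
  | andR {b Γ Δ A B} : ND b Γ (.fm A :: Δ) → ND b Γ (.fm B :: Δ) → ND b Γ (.fm (.and A B) :: Δ)
  | orL {b Γ Δ A B} : ND b (.fm A :: Γ) Δ → ND b (.fm B :: Γ) Δ → ND b (.fm (.or A B) :: Γ) Δ
  | orR {b Γ Δ A B} : ND b Γ (.fm A :: .fm B :: Δ) → ND b Γ (.fm (.or A B) :: Δ)
  | impL {b Γ Δ A B} : ND b (.fm (.imp A B) :: Γ) (.fm A :: Δ) → ND b (.fm B :: Γ) Δ →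
      ND b (.fm (.imp A B) :: Γ) Δ
  | impR {b Γ Δ A B} : ND b (.fm A :: Γ) [.fm B] → ND b Γ (.fm (.imp A B) :: Δ)
  | exclL {b Γ Δ A B} : ND b [.fm A] (.fm B :: Δ) → ND b (.fm (.excl A B) :: Γ) Δ
  | exclR {b Γ Δ A B} : ND b Γ (.fm A :: Δ) → ND b (.fm B :: Γ) (.fm (.excl A B) :: Δ) →
      ND b Γ (.fm (.excl A B) :: Δ)
  | nestL {b Γ Δ Γ₀ Δ₀} : ND b Γ₀ (Δ₀ ++ Δ) → ND b (.seq Γ₀ Δ₀ :: Γ) Δ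
  | nestR {b Γ Δ Γ₀ Δ₀} : ND b (Γ ++ Γ₀) Δ₀ → ND b Γ (.seq Γ₀ Δ₀ :: Δ)
  | unnestL {b Γ Δ Γ₀ Δ₀} : ND b (.seq Γ₀ Δ₀ :: Γ) Δ → ND b (Γ₀ ++ Γ) (Δ₀ ++ Δ)
  | unnestR {b Γ Δ Γ₀ Δ₀} : ND b Γ (.seq Γ₀ Δ₀ :: Δ) → ND b (Γ₀ ++ Γ) (Δ₀ ++ Δ)
/-- flattening of a nested-context member into a formula:
the first component is the antecedent reading `⌊-⌋`, the second the
succedent reading `⌈-⌉` -/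
def NForm.flat : NForm → Form × Form
  | .fm A => (A, A)
  | .seq Γ Δ =>
      let c := (Γ.attach.map (fun a => (NForm.flat a.1).1)).foldr Form.and Form.top
      let d := (Δ.attach.map (fun a => (NForm.flat a.1).2)).foldr Form.or Form.bot
      (.excl c d, .imp c d)
decreasing_by
  all_goals (simp_wf; have := List.sizeOf_lt_of_mem a.2; omega)

/-- the context `⌊Γ⌋` -/
def unL (Γ : List NForm) : Multiset Form := ↑(Γ.map (fun a => a.flat.1))
/-- the context `⌈Δ⌉` -/
def unR (Δ : List NForm) : Multiset Form := ↑(Δ.map (fun a => a.flat.2))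



/-! ### Auxiliary lemmas -/

theorem ldEq {b} {Γ Γ' Δ Δ' : Multiset Form} (hΓ : Γ = Γ') (hΔ : Δ = Δ') (h : LD b Γ Δ) :
    LD b Γ' Δ' := hΓ ▸ hΔ ▸ h

theorem ldWL {b} {Γ Δ : Multiset Form} (Θ : Multiset Form) (h : LD b Γ Δ) : LD b (Θ + Γ) Δ := by
  induction Θ using Multiset.induction with
  | empty => simpa using h
  | cons a s ih => simpa [Multiset.cons_add] using LD.weakL a ih

theorem ldWR {b} {Γ Δ : Multiset Form} (Θ : Multiset Form) (h : LD b Γ Δ) : LD b Γ (Θ + Δ) := by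
  induction Θ using Multiset.induction with
  | empty => simpa using h
  | cons a s ih => simpa [Multiset.cons_add] using LD.weakR a ih

theorem ldW {b} {Γ Δ Γ' Δ' : Multiset Form} (h : LD b Γ Δ) (hΓ : Γ ≤ Γ') (hΔ : Δ ≤ Δ') :
    LD b Γ' Δ' := by
  obtain ⟨k, rfl⟩ := Multiset.le_iff_exists_add.mp hΓ
  obtain ⟨m, rfl⟩ := Multiset.le_iff_exists_add.mp hΔ
  exact ldEq (add_comm k Γ) (add_comm m Δ) (ldWL k (ldWR m h))

theorem mleL (s t : Multiset Form) : s ≤ t + s :=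
  Multiset.le_iff_exists_add.mpr ⟨t, add_comm t s⟩

theorem mleR (s t : Multiset Form) : s ≤ s + t :=
  Multiset.le_iff_exists_add.mpr ⟨t, rfl⟩

theorem hypIn {b} (A : Form) {Γ Δ : Multiset Form} (hΓ : A ∈ Γ) (hΔ : A ∈ Δ) : LD b Γ Δ := by
  obtain ⟨Γ', rfl⟩ := Multiset.exists_cons_of_mem hΓ
  obtain ⟨Δ', rfl⟩ := Multiset.exists_cons_of_mem hΔ
  exact LD.hyp b A Γ' Δ'

theorem cutL {A B : Form} {Γ Δ : Multiset Form} (hBA : LD true {B} {A})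
    (h : LD true (A ::ₘ Γ) Δ) : LD true (B ::ₘ Γ) Δ :=
  LD.cut A (ldW hBA (by simp) (by simp))
    (ldW h (Multiset.cons_le_cons A (Multiset.le_cons_self Γ B)) le_rfl)

theorem cutR {A B : Form} {Γ Δ : Multiset Form} (hAB : LD true {A} {B})
    (h : LD true Γ (A ::ₘ Δ)) : LD true Γ (B ::ₘ Δ) :=
  LD.cut A (ldW h le_rfl (Multiset.cons_le_cons A (Multiset.le_cons_self Δ B)))
    (ldW hAB (by simp) (by simp))

theorem ldComp {A B C : Form} (h1 : LD true {A} {B}) (h2 : LD true {B} {C}) :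
    LD true {A} {C} := cutR h2 h1

theorem andIntro (l : List Form) : LD true ↑l {l.foldr .and .top} := by
  induction l with
  | nil => exact LD.topR true 0 0
  | cons a l ih =>
    show LD true (a ::ₘ (↑l : Multiset Form)) {Form.and a (l.foldr .and .top)}
    exact LD.andR (hypIn a (by simp) (by simp)) (LD.weakL a ih)

theorem orElim (l : List Form) : LD true {l.foldr .or .bot} ↑l := by
  induction l with
  | nil => exact LD.botL true 0 0
  | cons a l ih =>
    show LD true {Form.or a (l.foldr .or .bot)} (a ::ₘ (↑l : Multiset Form))
    exact LD.orL (hypIn a (by simp) (by simp)) (ldW ih le_rfl (Multiset.le_cons_self _ a))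

theorem collapseL {b} {Θ Ξ : Multiset Form} :
    ∀ l : List Form, LD b (↑l + Θ) Ξ → LD b ((l.foldr .and .top) ::ₘ Θ) Ξ
  | [], h => LD.topL (by simpa using h)
  | a :: l, h => by
    have h' : LD b (↑l + (a ::ₘ Θ)) Ξ :=
      ldEq (by simp [← Multiset.cons_coe, Multiset.cons_add, Multiset.add_cons]) rfl h
    exact LD.andL (ldEq (Multiset.cons_swap _ _ _) rfl (collapseL l h'))

theorem collapseR {b} {Θ Ξ : Multiset Form} :
    ∀ l : List Form, LD b Θ (↑l + Ξ) → LD b Θ ((l.foldr .or .bot) ::ₘ Ξ)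
  | [], h => LD.botR (by simpa using h)
  | a :: l, h => by
    have h' : LD b Θ (↑l + (a ::ₘ Ξ)) :=
      ldEq rfl (by simp [← Multiset.cons_coe, Multiset.cons_add, Multiset.add_cons]) h
    exact LD.orR (ldEq rfl (Multiset.cons_swap _ _ _) (collapseR l h'))

theorem expandL {Θ Ξ : Multiset Form} (l : List Form)
    (h : LD true ((l.foldr .and .top) ::ₘ Θ) Ξ) : LD true (↑l + Θ) Ξ :=
  LD.cut (l.foldr .and .top)
    (ldW (andIntro l) (mleR _ _) (by simp))
    (ldW h (Multiset.cons_le_cons _ (mleL _ _)) le_rfl)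

theorem expandR {Θ Ξ : Multiset Form} (l : List Form)
    (h : LD true Θ ((l.foldr .or .bot) ::ₘ Ξ)) : LD true Θ (↑l + Ξ) :=
  LD.cut (l.foldr .or .bot)
    (ldW h le_rfl (Multiset.cons_le_cons _ (mleL _ _)))
    (ldW (orElim l) (by simp) (mleR _ _))

theorem andCong {A A' B B' : Form} (h1 : LD true {A} {A'}) (h2 : LD true {B} {B'}) :
    LD true {Form.and A B} {Form.and A' B'} :=
  LD.andL (LD.andR (ldW h1 (by simp) le_rfl) (ldW h2 (by simp) le_rfl))

theorem orCong {A A' B B' : Form} (h1 : LD true {A} {A'}) (h2 : LD true {B} {B'}) :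
    LD true {Form.or A B} {Form.or A' B'} :=
  LD.orR (LD.orL (ldW h1 le_rfl (by simp)) (ldW h2 le_rfl (by simp)))

theorem impCong {A A' B B' : Form} (h1 : LD true {A'} {A}) (h2 : LD true {B} {B'}) :
    LD true {Form.imp A B} {Form.imp A' B'} :=
  LD.impR (ldEq (Multiset.cons_swap _ _ _) rfl
    (LD.impL (ldW h1 (by simp) (by simp)) (ldW h2 (by simp) le_rfl)))

theorem exclCong {A A' B B' : Form} (h1 : LD true {A} {A'}) (h2 : LD true {B'} {B}) :
    LD true {Form.excl A B} {Form.excl A' B'} :=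
  LD.exclL (ldEq rfl (Multiset.cons_swap _ _ _)
    (LD.exclR (ldW h1 le_rfl (by simp)) (ldW h2 (by simp) (by simp))))

theorem andSwap (A B C : Form) :
    LD true {Form.and A (Form.and B C)} {Form.and B (Form.and A C)} := by
  apply LD.andL
  apply ldEq (Multiset.cons_swap _ _ _) rfl
  apply LD.andL
  exact LD.andR (hypIn B (by simp) (by simp))
    (LD.andR (hypIn A (by simp) (by simp)) (hypIn C (by simp) (by simp)))

theorem orSwap (A B C : Form) :
    LD true {Form.or A (Form.or B C)} {Form.or B (Form.or A C)} := by
  apply LD.orL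
  · apply LD.orR
    apply ldEq rfl (Multiset.cons_swap _ _ _)
    apply LD.orR
    exact hypIn A (by simp) (by simp)
  · apply LD.orL
    · exact LD.orR (hypIn B (by simp) (by simp))
    · apply LD.orR
      apply ldEq rfl (Multiset.cons_swap _ _ _)
      apply LD.orR
      exact hypIn C (by simp) (by simp)

/-! ### Flattening -/

def flatL (Γ : List NForm) : Form := (Γ.map (fun a => a.flat.1)).foldr .and .top
def flatR (Δ : List NForm) : Form := (Δ.map (fun a => a.flat.2)).foldr .or .bot

@[simp] theorem flat_fm (A : Form) : (NForm.fm A).flat = (A, A) := by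
  simp [NForm.flat]

@[simp] theorem flat_seq (Γ Δ : List NForm) :
    (NForm.seq Γ Δ).flat = (.excl (flatL Γ) (flatR Δ), .imp (flatL Γ) (flatR Δ)) := by
  rw [NForm.flat]
  simp [flatL, flatR]

@[simp] theorem flatL_nil : flatL [] = .top := rfl
@[simp] theorem flatL_cons (a : NForm) (Γ : List NForm) :
    flatL (a :: Γ) = .and a.flat.1 (flatL Γ) := rfl
@[simp] theorem flatR_nil : flatR [] = .bot := rfl
@[simp] theorem flatR_cons (a : NForm) (Δ : List NForm) :
    flatR (a :: Δ) = .or a.flat.2 (flatR Δ) := rfl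

@[simp] theorem unL_nil : unL [] = 0 := rfl
@[simp] theorem unL_cons (a : NForm) (Γ : List NForm) :
    unL (a :: Γ) = a.flat.1 ::ₘ unL Γ := rfl
@[simp] theorem unL_append (Γ Γ' : List NForm) : unL (Γ ++ Γ') = unL Γ + unL Γ' := by
  simp [unL]
@[simp] theorem unR_nil : unR [] = 0 := rfl
@[simp] theorem unR_cons (a : NForm) (Δ : List NForm) :
    unR (a :: Δ) = a.flat.2 ::ₘ unR Δ := rfl
@[simp] theorem unR_append (Δ Δ' : List NForm) : unR (Δ ++ Δ') = unR Δ + unR Δ' := by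
  simp [unR]

/-- the equivalence statement for nested-context members -/
def NP (a b : NForm) : Prop :=
  (LD true {a.flat.1} {b.flat.1} ∧ LD true {b.flat.1} {a.flat.1}) ∧
  (LD true {a.flat.2} {b.flat.2} ∧ LD true {b.flat.2} {a.flat.2})

/-- the equivalence statement for nested contexts -/
def CP (Γ Γ' : List NForm) : Prop :=
  (LD true {flatL Γ} {flatL Γ'} ∧ LD true {flatL Γ'} {flatL Γ}) ∧
  (LD true {flatR Γ} {flatR Γ'} ∧ LD true {flatR Γ'} {flatR Γ})

theorem npFm (A : Form) : NP (.fm A) (.fm A) := by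
  refine ⟨⟨?_, ?_⟩, ?_, ?_⟩ <;> exact hypIn A (by simp) (by simp)

theorem npSeq {Γ Γ' Δ Δ' : List NForm} (hΓ : CP Γ Γ') (hΔ : CP Δ Δ') :
    NP (.seq Γ Δ) (.seq Γ' Δ') := by
  obtain ⟨⟨g1, g2⟩, g3, g4⟩ := hΓ
  obtain ⟨⟨d1, d2⟩, d3, d4⟩ := hΔ
  refine ⟨⟨?_, ?_⟩, ?_, ?_⟩ <;> simp only [flat_seq]
  · exact exclCong g1 d4
  · exact exclCong g2 d3
  · exact impCong g2 d3
  · exact impCong g1 d4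

theorem cpNil : CP [] [] := by
  refine ⟨⟨?_, ?_⟩, ?_, ?_⟩
  · exact hypIn .top (by simp) (by simp)
  · exact hypIn .top (by simp) (by simp)
  · exact hypIn .bot (by simp) (by simp)
  · exact hypIn .bot (by simp) (by simp)

theorem cpCons {a b : NForm} {Γ Γ' : List NForm} (hab : NP a b) (hΓ : CP Γ Γ') :
    CP (a :: Γ) (b :: Γ') := by
  obtain ⟨⟨a1, a2⟩, a3, a4⟩ := hab
  obtain ⟨⟨g1, g2⟩, g3, g4⟩ := hΓ
  refine ⟨⟨?_, ?_⟩, ?_, ?_⟩ <;> simp only [flatL_cons, flatR_cons]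
  · exact andCong a1 g1
  · exact andCong a2 g2
  · exact orCong a3 g3
  · exact orCong a4 g4

theorem cpSwap (a b : NForm) (Γ : List NForm) : CP (a :: b :: Γ) (b :: a :: Γ) := by
  refine ⟨⟨?_, ?_⟩, ?_, ?_⟩ <;> simp only [flatL_cons, flatR_cons]
  · exact andSwap _ _ _
  · exact andSwap _ _ _
  · exact orSwap _ _ _
  · exact orSwap _ _ _

theorem cpTrans {Γ Γ' Γ'' : List NForm} (h1 : CP Γ Γ') (h2 : CP Γ' Γ'') : CP Γ Γ'' := by
  obtain ⟨⟨g1, g2⟩, g3, g4⟩ := h1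
  obtain ⟨⟨k1, k2⟩, k3, k4⟩ := h2
  exact ⟨⟨ldComp g1 k1, ldComp k2 g2⟩, ldComp g3 k3, ldComp k4 g4⟩

theorem ceqv {Γ Γ' : List NForm} (h : CEq Γ Γ') : CP Γ Γ' := by
  refine CEq.rec (motive_1 := fun a b _ => NP a b) (motive_2 := fun Γ Γ' _ => CP Γ Γ')
    ?_ ?_ ?_ ?_ ?_ ?_ h
  · exact npFm
  · exact fun _ _ ih1 ih2 => npSeq ih1 ih2
  · exact cpNil
  · exact fun _ _ ih1 ih2 => cpCons ih1 ih2
  · exact fun a b Γ => cpSwap a b Γ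
  · exact fun _ _ ih1 ih2 => cpTrans ih1 ih2

theorem unAndIntro (Γ : List NForm) : LD true (unL Γ) {flatL Γ} := andIntro _
theorem unOrElim (Δ : List NForm) : LD true {flatR Δ} (unR Δ) := orElim _

theorem ucollL {b} {Θ Ξ : Multiset Form} (Γ : List NForm) (h : LD b (unL Γ + Θ) Ξ) :
    LD b (flatL Γ ::ₘ Θ) Ξ := collapseL _ h
theorem ucollR {b} {Θ Ξ : Multiset Form} (Δ : List NForm) (h : LD b Θ (unR Δ + Ξ)) :
    LD b Θ (flatR Δ ::ₘ Ξ) := collapseR _ h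
theorem uexpL {Θ Ξ : Multiset Form} (Γ : List NForm) (h : LD true (flatL Γ ::ₘ Θ) Ξ) :
    LD true (unL Γ + Θ) Ξ := expandL _ h
theorem uexpR {Θ Ξ : Multiset Form} (Δ : List NForm) (h : LD true Θ (flatR Δ ::ₘ Ξ)) :
    LD true Θ (unR Δ + Ξ) := expandR _ h

theorem exchL {Γ Γ' : List NForm} {Ξ : Multiset Form} (h : CEq Γ Γ')
    (hd : LD true (unL Γ) Ξ) : LD true (unL Γ') Ξ := by
  have h1 : LD true (flatL Γ ::ₘ 0) Ξ := ucollL Γ (by simpa using hd)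
  have h2 : LD true (flatL Γ' ::ₘ 0) Ξ := cutL (ceqv h).1.2 h1
  simpa using uexpL Γ' h2

theorem exchR {Δ Δ' : List NForm} {Θ : Multiset Form} (h : CEq Δ Δ')
    (hd : LD true Θ (unR Δ)) : LD true Θ (unR Δ') := by
  have h1 : LD true Θ (flatR Δ ::ₘ 0) := ucollR Δ (by simpa using hd)
  have h2 : LD true Θ (flatR Δ' ::ₘ 0) := cutR (ceqv h).2.1 h1
  simpa using uexpR Δ' h2

theorem nd_ld {b} {Γ Δ : List NForm} (h : ND b Γ Δ) : LD true (unL Γ) (unR Δ) := by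
  induction h with
  | exch hΓ hΔ _ ih => exact exchR hΔ (exchL hΓ ih)
  | hyp b A Γ Δ => simpa using LD.hyp true A (unL Γ) (unR Δ)
  | cut A _ _ ih1 ih2 =>
    exact LD.cut A (by simpa using ih1) (by simpa using ih2)
  | weakL A _ ih => simpa using LD.weakL A ih
  | weakR A _ ih => simpa using LD.weakR A ih
  | contrL _ ih => simpa using LD.contrL (by simpa using ih)
  | contrR _ ih => simpa using LD.contrR (by simpa using ih)
  | topL _ ih => simpa using LD.topL ih
  | topR b Γ Δ => simpa using LD.topR true (unL Γ) (unR Δ)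
  | botL b Γ Δ => simpa using LD.botL true (unL Γ) (unR Δ)
  | botR _ ih => simpa using LD.botR ih
  | andL _ ih => simpa using LD.andL (by simpa using ih)
  | andR _ _ ih1 ih2 => simpa using LD.andR (by simpa using ih1) (by simpa using ih2)
  | orL _ _ ih1 ih2 => simpa using LD.orL (by simpa using ih1) (by simpa using ih2)
  | orR _ ih => simpa using LD.orR (by simpa using ih)
  | impL _ _ ih1 ih2 => simpa using LD.impL (by simpa using ih1) (by simpa using ih2)
  | impR _ ih => simpa using LD.impR (by simpa using ih)
  | exclL _ ih => simpa using LD.exclL (by simpa using ih)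
  | exclR _ _ ih1 ih2 => simpa using LD.exclR (by simpa using ih1) (by simpa using ih2)
  | nestL _ ih =>
    simp only [unL_cons, flat_seq]
    apply LD.exclL
    have c1 : LD true (flatL _ ::ₘ 0) (unR _ + unR _) := ucollL _ (by simpa using ih)
    exact ucollR _ c1
  | nestR _ ih =>
    simp only [unR_cons, flat_seq]
    apply LD.impR
    have c0 : LD true (unL _ + unL _) (unR _) := ldEq (add_comm _ _) rfl (by simpa using ih)
    have c1 := ucollL _ c0
    exact ucollR _ (ldEq rfl (add_zero _).symm c1)
  | @unnestL b Γ Δ Γ₀ Δ₀ _ ih =>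
    simp only [unL_cons, flat_seq] at ih
    simp only [unL_append, unR_append]
    apply LD.cut (Form.excl (flatL Γ₀) (flatR Δ₀))
    · have base : LD true (unL Γ₀) (Form.excl (flatL Γ₀) (flatR Δ₀) ::ₘ unR Δ₀) :=
        LD.exclR (ldW (unAndIntro Γ₀) le_rfl (by simp))
          (ldW (unOrElim Δ₀) (by simp) (Multiset.le_cons_self _ _))
      exact ldW base (mleR _ _) (Multiset.cons_le_cons _ (mleR _ _))
    · exact ldW ih (Multiset.cons_le_cons _ (mleL _ _)) (mleL _ _)
  | @unnestR b Γ Δ Γ₀ Δ₀ _ ih =>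
    simp only [unR_cons, flat_seq] at ih
    simp only [unL_append, unR_append]
    apply LD.cut (Form.imp (flatL Γ₀) (flatR Δ₀))
    · exact ldW ih (mleL _ _) (Multiset.cons_le_cons _ (mleL _ _))
    · apply LD.impL
      · exact ldW (unAndIntro Γ₀)
          (le_trans (mleR _ _) (Multiset.le_cons_self _ _)) (by simp)
      · exact ldW (unOrElim Δ₀) (by simp) (mleR _ _)


/-- if a nested sequent is derivable in N-LBiI, then its flattening
is derivable in LBiI -/
theorem nlbii_to_lbii (Γ Δ : List NForm) (h : ND true Γ Δ) :
    LD true (unL Γ) (unR Δ) := nd_ld h
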